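/- If G is a prime {P5, P5-bar}-free graph which contains an induced 5-cycle, then G is isomorphic to C5. -/
import Mathlib


open SimpleGraph

variable {V : Type*} {W : Type*}

/-- A vertex `v` is *mixed* on a set `X` if it has both a neighbor and a non-neighbor in `X`. -/
def Mixed (G : SimpleGraph V) (v : V) (X : Set V) : Prop :=
  (∃ x ∈ X, G.Adj v x) ∧ (∃ x ∈ X, ¬ G.Adj v x)

/-- A homogeneous set: `1 < |X| < |V(G)|` and no outside vertex is mixed on `X`. -/
def IsHomogeneousSet [Fintype V] (G : SimpleGraph V) (X : Set V) : Prop :=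
  1 < X.ncard ∧ X.ncard < Fintype.card V ∧ ∀ v ∉ X, ¬ Mixed G v X

/-- A graph is prime if it has at least four vertices and no homogeneous set. -/
def IsPrimeGraph [Fintype V] (G : SimpleGraph V) : Prop :=
  4 ≤ Fintype.card V ∧ ∀ X : Set V, ¬ IsHomogeneousSet G X

/-- A vertex is simplicial if its neighborhood is a clique. -/
def Simplicial (G : SimpleGraph V) (v : V) : Prop :=
  G.IsClique (G.neighborSet v)

/-- A vertex is antisimplicial if its non-neighborhood is a stable set. -/
def Antisimplicial (G : SimpleGraph V) (v : V) : Prop :=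
  Gᶜ.IsClique {u | ¬ G.Adj v u}

/-- `G` is `H`-free: there is no induced copy of `H` in `G`. -/
def HFree (H : SimpleGraph W) (G : SimpleGraph V) : Prop :=
  ¬ Nonempty (H ↪g G)

namespace Stmt18Aux

def cadj5 (i j : Fin 5) : Bool := ((i - j).val == 1) || ((j - i).val == 1)
def padj5 (i j : Fin 5) : Bool := (i.val + 1 == j.val) || (j.val + 1 == i.val)
def padjb : Bool → Fin 5 → Fin 5 → Bool
  | true, i, j => !(padj5 i j)
  | false, i, j => padj5 i j

inductive PatKind where
  | N | F | A (i : Fin 5) | B (i : Fin 5)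
deriving DecidableEq, Fintype

open PatKind in
def patFun : PatKind → Fin 5 → Bool
  | N, _ => false
  | F, _ => true
  | A i, m => decide (m = i - 1 ∨ m = i ∨ m = i + 1)
  | B i, m => decide (m = i - 1 ∨ m = i + 1)

def tyIdx : PatKind → Option (Fin 5)
  | .A i => some i
  | .B i => some i
  | _ => none

def pidx : PatKind → ℕ
  | .N => 0
  | .F => 1
  | .A i => 2 + i.val
  | .B i => 7 + i.val

def incompatB (p q : PatKind) (b : Bool) : Bool :=
  match hp : tyIdx p, tyIdx q with
  | none, none => false
  | none, some _ => if p = .N then b else !b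
  | some _, none => if q = .N then b else !b
  | some i, some j => if i = j then false else (b != cadj5 i j)

def sadj (s : Fin 5 → Bool) (k l : Fin 6) : Bool :=
  if k = l then false
  else if hk : k.val < 5 then
    if hl : l.val < 5 then cadj5 ⟨k.val, hk⟩ ⟨l.val, hl⟩ else s ⟨k.val, hk⟩
  else if hl : l.val < 5 then s ⟨l.val, hl⟩
  else false

def tadj (s t : Fin 5 → Bool) (b : Bool) (k l : Fin 7) : Bool :=
  if k = l then false
  else if hk : k.val < 5 then
    if hl : l.val < 5 then cadj5 ⟨k.val, hk⟩ ⟨l.val, hl⟩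
    else if l.val = 5 then s ⟨k.val, hk⟩ else t ⟨k.val, hk⟩
  else if k.val = 5 then
    if hl : l.val < 5 then s ⟨l.val, hl⟩ else b
  else
    if hl : l.val < 5 then t ⟨l.val, hl⟩ else b

def wtab1 : List (Bool × List (Fin 6)) := [(false, [0,0,0,0,0]),
  (false, [2,3,4,0,5]),
  (false, [3,4,0,1,5]),
  (false, [2,3,4,0,5]),
  (false, [0,4,3,2,5]),
  (false, [0,0,0,0,0]),
  (false, [0,4,3,2,5]),
  (false, [0,0,0,0,0]),
  (false, [0,1,2,3,5]),
  (false, [0,0,0,0,0]),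
  (false, [0,0,0,0,0]),
  (true, [0,3,1,4,5]),
  (false, [1,0,4,3,5]),
  (true, [2,0,3,1,5]),
  (false, [0,0,0,0,0]),
  (true, [0,3,1,4,5]),
  (false, [1,2,3,4,5]),
  (false, [1,2,3,4,5]),
  (false, [0,0,0,0,0]),
  (false, [0,0,0,0,0]),
  (false, [0,0,0,0,0]),
  (true, [0,2,4,1,5]),
  (true, [1,4,2,0,5]),
  (true, [2,4,1,3,5]),
  (false, [0,1,2,3,5]),
  (false, [0,0,0,0,0]),
  (true, [3,1,4,2,5]),
  (true, [1,3,0,2,5]),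
  (false, [0,0,0,0,0]),
  (true, [0,2,4,1,5]),
  (true, [1,4,2,0,5]),
  (false, [0,0,0,0,0])]

def wtab2 : List (List (List (Bool × List (Fin 7)))) := [[[(false, [0,0,0,0,0]), (false, [0,0,0,0,0])],
   [(false, [0,0,0,0,0]), (false, [0,0,0,0,0])],
   [(false, [0,0,0,0,0]), (false, [2,3,4,6,5])],
   [(false, [0,0,0,0,0]), (false, [3,4,0,6,5])],
   [(false, [0,0,0,0,0]), (false, [0,4,3,6,5])],
   [(false, [0,0,0,0,0]), (false, [0,1,2,6,5])],
   [(false, [0,0,0,0,0]), (false, [1,2,3,6,5])],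
   [(false, [0,0,0,0,0]), (false, [2,3,4,6,5])],
   [(false, [0,0,0,0,0]), (false, [3,4,0,6,5])],
   [(false, [0,0,0,0,0]), (false, [0,4,3,6,5])],
   [(false, [0,0,0,0,0]), (false, [0,1,2,6,5])],
   [(false, [0,0,0,0,0]), (false, [1,2,3,6,5])]],
  [[(false, [0,0,0,0,0]), (false, [0,0,0,0,0])],
   [(false, [0,0,0,0,0]), (false, [0,0,0,0,0])],
   [(true, [1,4,2,6,5]), (false, [0,0,0,0,0])],
   [(true, [0,2,4,6,5]), (false, [0,0,0,0,0])],
   [(true, [1,3,0,6,5]), (false, [0,0,0,0,0])],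
   [(true, [2,4,1,6,5]), (false, [0,0,0,0,0])],
   [(true, [0,3,1,6,5]), (false, [0,0,0,0,0])],
   [(true, [1,4,2,6,5]), (false, [0,0,0,0,0])],
   [(true, [0,2,4,6,5]), (false, [0,0,0,0,0])],
   [(true, [1,3,0,6,5]), (false, [0,0,0,0,0])],
   [(true, [2,4,1,6,5]), (false, [0,0,0,0,0])],
   [(true, [0,3,1,6,5]), (false, [0,0,0,0,0])]],
  [[(false, [0,0,0,0,0]), (false, [2,3,4,5,6])],
   [(true, [1,4,2,5,6]), (false, [0,0,0,0,0])],
   [(false, [0,0,0,0,0]), (false, [0,0,0,0,0])],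
   [(false, [3,2,6,0,5]), (false, [0,0,0,0,0])],
   [(false, [0,0,0,0,0]), (true, [3,5,2,4,6])],
   [(false, [0,0,0,0,0]), (true, [1,6,0,2,5])],
   [(false, [2,1,5,4,6]), (false, [0,0,0,0,0])],
   [(false, [0,0,0,0,0]), (false, [0,0,0,0,0])],
   [(false, [3,2,6,0,5]), (false, [0,0,0,0,0])],
   [(false, [0,0,0,0,0]), (false, [0,5,6,3,2])],
   [(false, [0,0,0,0,0]), (false, [0,5,6,2,3])],
   [(false, [1,5,4,3,6]), (false, [0,0,0,0,0])]],
  [[(false, [0,0,0,0,0]), (false, [3,4,0,5,6])],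
   [(true, [0,2,4,5,6]), (false, [0,0,0,0,0])],
   [(false, [3,2,5,0,6]), (false, [0,0,0,0,0])],
   [(false, [0,0,0,0,0]), (false, [0,0,0,0,0])],
   [(false, [4,0,5,2,6]), (false, [0,0,0,0,0])],
   [(false, [0,0,0,0,0]), (true, [0,6,1,4,5])],
   [(false, [0,0,0,0,0]), (true, [2,6,1,3,5])],
   [(false, [2,5,0,4,6]), (false, [0,0,0,0,0])],
   [(false, [0,0,0,0,0]), (false, [0,0,0,0,0])],
   [(false, [0,5,2,3,6]), (false, [0,0,0,0,0])],
   [(false, [0,0,0,0,0]), (false, [1,5,6,4,3])],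
   [(false, [0,0,0,0,0]), (false, [1,5,6,3,4])]],
  [[(false, [0,0,0,0,0]), (false, [0,4,3,5,6])],
   [(true, [1,3,0,5,6]), (false, [0,0,0,0,0])],
   [(false, [0,0,0,0,0]), (true, [3,6,2,4,5])],
   [(false, [4,0,6,2,5]), (false, [0,0,0,0,0])],
   [(false, [0,0,0,0,0]), (false, [0,0,0,0,0])],
   [(false, [0,1,5,3,6]), (false, [0,0,0,0,0])],
   [(false, [0,0,0,0,0]), (true, [0,5,4,1,6])],
   [(false, [0,0,0,0,0]), (false, [0,4,6,5,2])],
   [(false, [3,5,1,0,6]), (false, [0,0,0,0,0])],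
   [(false, [0,0,0,0,0]), (false, [0,0,0,0,0])],
   [(false, [0,4,6,2,5]), (false, [0,0,0,0,0])],
   [(false, [0,0,0,0,0]), (false, [2,5,6,0,4])]],
  [[(false, [0,0,0,0,0]), (false, [0,1,2,5,6])],
   [(true, [2,4,1,5,6]), (false, [0,0,0,0,0])],
   [(false, [0,0,0,0,0]), (true, [1,5,0,2,6])],
   [(false, [0,0,0,0,0]), (true, [0,5,1,4,6])],
   [(false, [0,1,6,3,5]), (false, [0,0,0,0,0])],
   [(false, [0,0,0,0,0]), (false, [0,0,0,0,0])],
   [(false, [1,0,6,3,5]), (false, [0,0,0,0,0])],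
   [(false, [0,0,0,0,0]), (false, [0,1,6,5,3])],
   [(false, [0,0,0,0,0]), (false, [1,0,6,5,3])],
   [(false, [0,1,6,3,5]), (false, [0,0,0,0,0])],
   [(false, [0,0,0,0,0]), (false, [0,0,0,0,0])],
   [(false, [1,0,6,3,5]), (false, [0,0,0,0,0])]],
  [[(false, [0,0,0,0,0]), (false, [1,2,3,5,6])],
   [(true, [0,3,1,5,6]), (false, [0,0,0,0,0])],
   [(false, [2,1,6,4,5]), (false, [0,0,0,0,0])],
   [(false, [0,0,0,0,0]), (true, [2,5,1,3,6])],
   [(false, [0,0,0,0,0]), (true, [0,6,4,1,5])],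
   [(false, [1,0,5,3,6]), (false, [0,0,0,0,0])],
   [(false, [0,0,0,0,0]), (false, [0,0,0,0,0])],
   [(false, [2,1,6,4,5]), (false, [0,0,0,0,0])],
   [(false, [0,0,0,0,0]), (false, [1,2,6,5,4])],
   [(false, [0,0,0,0,0]), (false, [2,1,6,5,4])],
   [(false, [0,5,3,2,6]), (false, [0,0,0,0,0])],
   [(false, [0,0,0,0,0]), (false, [0,0,0,0,0])]],
  [[(false, [0,0,0,0,0]), (false, [2,3,4,5,6])],
   [(true, [1,4,2,5,6]), (false, [0,0,0,0,0])],
   [(false, [0,0,0,0,0]), (false, [0,0,0,0,0])],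
   [(false, [2,6,0,4,5]), (false, [0,0,0,0,0])],
   [(false, [0,0,0,0,0]), (false, [0,4,5,6,2])],
   [(false, [0,0,0,0,0]), (false, [0,1,5,6,3])],
   [(false, [2,1,5,4,6]), (false, [0,0,0,0,0])],
   [(false, [0,0,0,0,0]), (false, [0,0,0,0,0])],
   [(false, [2,6,0,4,5]), (false, [0,0,0,0,0])],
   [(false, [0,0,0,0,0]), (true, [1,3,5,2,6])],
   [(false, [0,0,0,0,0]), (true, [4,1,6,0,5])],
   [(false, [1,5,4,3,6]), (false, [0,0,0,0,0])]],
  [[(false, [0,0,0,0,0]), (false, [3,4,0,5,6])],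
   [(true, [0,2,4,5,6]), (false, [0,0,0,0,0])],
   [(false, [3,2,5,0,6]), (false, [0,0,0,0,0])],
   [(false, [0,0,0,0,0]), (false, [0,0,0,0,0])],
   [(false, [3,6,1,0,5]), (false, [0,0,0,0,0])],
   [(false, [0,0,0,0,0]), (false, [1,0,5,6,3])],
   [(false, [0,0,0,0,0]), (false, [1,2,5,6,4])],
   [(false, [2,5,0,4,6]), (false, [0,0,0,0,0])],
   [(false, [0,0,0,0,0]), (false, [0,0,0,0,0])],
   [(false, [0,5,2,3,6]), (false, [0,0,0,0,0])],
   [(false, [0,0,0,0,0]), (true, [2,0,6,1,5])],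
   [(false, [0,0,0,0,0]), (true, [0,2,6,1,5])]],
  [[(false, [0,0,0,0,0]), (false, [0,4,3,5,6])],
   [(true, [1,3,0,5,6]), (false, [0,0,0,0,0])],
   [(false, [0,0,0,0,0]), (false, [0,6,5,3,2])],
   [(false, [0,6,2,3,5]), (false, [0,0,0,0,0])],
   [(false, [0,0,0,0,0]), (false, [0,0,0,0,0])],
   [(false, [0,1,5,3,6]), (false, [0,0,0,0,0])],
   [(false, [0,0,0,0,0]), (false, [2,1,5,6,4])],
   [(false, [0,0,0,0,0]), (true, [1,3,6,2,5])],
   [(false, [0,6,2,3,5]), (false, [0,0,0,0,0])],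
   [(false, [0,0,0,0,0]), (false, [0,0,0,0,0])],
   [(false, [1,5,3,4,6]), (false, [0,0,0,0,0])],
   [(false, [0,0,0,0,0]), (true, [3,0,5,4,6])]],
  [[(false, [0,0,0,0,0]), (false, [0,1,2,5,6])],
   [(true, [2,4,1,5,6]), (false, [0,0,0,0,0])],
   [(false, [0,0,0,0,0]), (false, [0,6,5,2,3])],
   [(false, [0,0,0,0,0]), (false, [1,6,5,4,3])],
   [(false, [0,4,5,2,6]), (false, [0,0,0,0,0])],
   [(false, [0,0,0,0,0]), (false, [0,0,0,0,0])],
   [(false, [0,6,3,2,5]), (false, [0,0,0,0,0])],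
   [(false, [0,0,0,0,0]), (true, [4,1,5,0,6])],
   [(false, [0,0,0,0,0]), (true, [2,0,5,1,6])],
   [(false, [1,6,3,4,5]), (false, [0,0,0,0,0])],
   [(false, [0,0,0,0,0]), (false, [0,0,0,0,0])],
   [(false, [0,6,3,2,5]), (false, [0,0,0,0,0])]],
  [[(false, [0,0,0,0,0]), (false, [1,2,3,5,6])],
   [(true, [0,3,1,5,6]), (false, [0,0,0,0,0])],
   [(false, [1,6,4,3,5]), (false, [0,0,0,0,0])],
   [(false, [0,0,0,0,0]), (false, [1,6,5,3,4])],
   [(false, [0,0,0,0,0]), (false, [2,6,5,0,4])],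
   [(false, [1,0,5,3,6]), (false, [0,0,0,0,0])],
   [(false, [0,0,0,0,0]), (false, [0,0,0,0,0])],
   [(false, [1,6,4,3,5]), (false, [0,0,0,0,0])],
   [(false, [0,0,0,0,0]), (true, [0,2,5,1,6])],
   [(false, [0,0,0,0,0]), (true, [3,0,6,4,5])],
   [(false, [0,5,3,2,6]), (false, [0,0,0,0,0])],
   [(false, [0,0,0,0,0]), (false, [0,0,0,0,0])]]]

def bitsIdx (s : Fin 5 → Bool) : ℕ :=
  (cond (s 0) 1 0) + 2 * (cond (s 1) 1 0) + 4 * (cond (s 2) 1 0)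
    + 8 * (cond (s 3) 1 0) + 16 * (cond (s 4) 1 0)

def wit1 (s : Fin 5 → Bool) : Bool × List (Fin 6) := wtab1.getD (bitsIdx s) (false, [])
def wit1f (s : Fin 5 → Bool) (i : Fin 5) : Fin 6 := (wit1 s).2.getD i.val 0
def wit1b (s : Fin 5 → Bool) : Bool := (wit1 s).1

def wit2 (p q : PatKind) (b : Bool) : Bool × List (Fin 7) :=
  ((wtab2.getD (pidx p) []).getD (pidx q) []).getD (cond b 1 0) (false, [])
def wit2f (p q : PatKind) (b : Bool) (i : Fin 5) : Fin 7 := (wit2 p q b).2.getD i.val 0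
def wit2b (p q : PatKind) (b : Bool) : Bool := (wit2 p q b).1

set_option maxRecDepth 10000 in
lemma D1 : ∀ s : Fin 5 → Bool, (∃ p : PatKind, patFun p = s) ∨
    (Function.Injective (wit1f s) ∧ ∀ i j : Fin 5, i ≠ j →
      padjb (wit1b s) i j = sadj s (wit1f s i) (wit1f s j)) := by decide

set_option maxRecDepth 100000 in
lemma D2 : ∀ p q : PatKind, ∀ b : Bool, incompatB p q b = true →
    (Function.Injective (wit2f p q b) ∧ ∀ i j : Fin 5, i ≠ j →
      padjb (wit2b p q b) i j
        = tadj (patFun p) (patFun q) b (wit2f p q b i) (wit2f p q b j)) := by decide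


variable {V : Type*}

def pick : Bool → SimpleGraph (Fin 5)
  | true => (pathGraph 5)ᶜ
  | false => pathGraph 5

lemma cadj5_iff (i j : Fin 5) : (cycleGraph 5).Adj i j ↔ cadj5 i j = true := by
  rw [cycleGraph_adj']
  simp [cadj5]

lemma padj5_iff (i j : Fin 5) : (pathGraph 5).Adj i j ↔ padj5 i j = true := by
  rw [pathGraph_adj]
  simp [padj5]

lemma pick_adj (bar : Bool) (i j : Fin 5) (hij : i ≠ j) :
    (pick bar).Adj i j ↔ padjb bar i j = true := by
  cases bar
  · exact padj5_iff i j
  · simp [pick, padjb, compl_adj, hij, padj5_iff]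

/-- Build an embedding from boolean adjacency data. -/
def embOfBool {k : ℕ} {G : SimpleGraph V} (H : SimpleGraph (Fin k)) (h : Fin k → Fin k → Bool)
    (hH : ∀ i j, i ≠ j → (H.Adj i j ↔ h i j = true))
    (g : Fin k → V) (hg : Function.Injective g)
    (hadj : ∀ i j, i ≠ j → (G.Adj (g i) (g j) ↔ h i j = true)) : H ↪g G where
  toFun := g
  inj' := hg
  map_rel_iff' := by
    intro i j
    rcases eq_or_ne i j with rfl | hij
    · exact iff_of_false (G.irrefl) (H.irrefl)
    · exact (hadj i j hij).trans (hH i j hij).symm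

def vmap6 (e : Fin 5 → V) (u : V) (k : Fin 6) : V :=
  if hk : k.val < 5 then e ⟨k.val, hk⟩ else u

def vmap7 (e : Fin 5 → V) (u w : V) (k : Fin 7) : V :=
  if hk : k.val < 5 then e ⟨k.val, hk⟩ else if k.val = 5 then u else w

lemma vmap6_inj (e : Fin 5 → V) (u : V) (he : Function.Injective e)
    (hu : u ∉ Set.range e) : Function.Injective (vmap6 e u) := by
  intro a b hab
  have ha5 := a.isLt
  have hb5 := b.isLt
  unfold vmap6 at hab
  have Hu : ∀ m : Fin 5, e m ≠ u := fun m h => hu ⟨m, h⟩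
  split_ifs at hab
  · have := congrArg Fin.val (he hab)
    exact Fin.ext (by simpa using this)
  · exact absurd hab (Hu _)
  · exact absurd hab (Hu _).symm
  · exact Fin.ext (by omega)

lemma vmap7_inj (e : Fin 5 → V) (u w : V) (he : Function.Injective e)
    (hu : u ∉ Set.range e) (hw : w ∉ Set.range e) (huw : u ≠ w) :
    Function.Injective (vmap7 e u w) := by
  have Hu : ∀ m : Fin 5, e m ≠ u := fun m h => hu ⟨m, h⟩
  have Hw : ∀ m : Fin 5, e m ≠ w := fun m h => hw ⟨m, h⟩
  intro a b hab
  have ha5 := a.isLt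
  have hb5 := b.isLt
  unfold vmap7 at hab
  split_ifs at hab
  all_goals first
    | (exact Fin.ext (by simpa using congrArg Fin.val (he hab)))
    | (exact absurd hab (Hu _))
    | (exact absurd hab (Hu _).symm)
    | (exact absurd hab (Hw _))
    | (exact absurd hab (Hw _).symm)
    | (exact absurd hab huw)
    | (exact absurd hab huw.symm)
    | (exact Fin.ext (by omega))

variable {G : SimpleGraph V}

lemma vmap6_adj (e : cycleGraph 5 ↪g G) (u : V) (s : Fin 5 → Bool)
    (hs : ∀ m, G.Adj u (e m) ↔ s m = true) :
    ∀ k l : Fin 6, k ≠ l →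
      (G.Adj (vmap6 (⇑e) u k) (vmap6 (⇑e) u l) ↔ sadj s k l = true) := by
  intro k l hkl
  have hk7 := k.isLt
  have hl7 := l.isLt
  unfold vmap6 sadj
  rw [if_neg hkl]
  split_ifs with h1 h2 h2
  · exact e.map_rel_iff.trans (cadj5_iff _ _)
  · exact (G.adj_comm _ _).trans (hs _)
  · exact hs _
  · exact absurd (Fin.ext (by omega) : k = l) hkl

lemma vmap7_adj (e : cycleGraph 5 ↪g G) (u w : V) (s t : Fin 5 → Bool) (b : Bool)
    (hs : ∀ m, G.Adj u (e m) ↔ s m = true) (ht : ∀ m, G.Adj w (e m) ↔ t m = true)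
    (hb : G.Adj u w ↔ b = true) :
    ∀ k l : Fin 7, k ≠ l →
      (G.Adj (vmap7 (⇑e) u w k) (vmap7 (⇑e) u w l) ↔ tadj s t b k l = true) := by
  intro k l hkl
  have hk7 := k.isLt
  have hl7 := l.isLt
  unfold vmap7 tadj
  rw [if_neg hkl]
  split_ifs
  all_goals first
    | (exact e.map_rel_iff.trans (cadj5_iff _ _))
    | (exact (G.adj_comm _ _).trans (hs _))
    | (exact hs _)
    | (exact (G.adj_comm _ _).trans (ht _))
    | (exact ht _)
    | (exact hb)
    | (exact (G.adj_comm _ _).trans hb)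
    | (exact absurd (Fin.ext (by omega) : k = l) hkl)

lemma cadj5_symm : ∀ i j : Fin 5, cadj5 i j = cadj5 j i := by decide

lemma F1 : ∀ (p : PatKind) (i k : Fin 5), tyIdx p = some i → k ≠ i →
    patFun p k = cadj5 k i := by decide

lemma inc_some : ∀ (p q : PatKind) (i j : Fin 5) (b : Bool), tyIdx p = some i →
    tyIdx q = some j → i ≠ j → incompatB p q b = (b != cadj5 i j) := by decide

lemma inc_N : ∀ (q : PatKind) (b : Bool), tyIdx q ≠ none →
    incompatB .N q b = b := by decide

lemma inc_F : ∀ (q : PatKind) (b : Bool), tyIdx q ≠ none →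
    incompatB .F q b = !b := by decide

lemma tyIdx_none : ∀ p : PatKind, tyIdx p = none → p = .N ∨ p = .F := by decide

variable {V : Type*} {G : SimpleGraph V}

lemma single (hf1 : ¬ Nonempty (pathGraph 5 ↪g G)) (hf2 : ¬ Nonempty ((pathGraph 5)ᶜ ↪g G))
    (e : cycleGraph 5 ↪g G) (v : V) (hv : v ∉ Set.range ⇑e) :
    ∃ p : PatKind, ∀ m, G.Adj v (e m) ↔ patFun p m = true := by
  classical
  set s : Fin 5 → Bool := fun m => decide (G.Adj v (e m)) with hsdef
  have hs : ∀ m, G.Adj v (e m) ↔ s m = true := fun m => decide_eq_true_iff.symm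
  rcases D1 s with ⟨p, hp⟩ | ⟨hinj, hiff⟩
  · exact ⟨p, fun m => by rw [hp]; exact hs m⟩
  · exfalso
    have hne : Nonempty (pick (wit1b s) ↪g G) := ⟨embOfBool _
      (fun i j => sadj s (wit1f s i) (wit1f s j))
      (fun i j hij => (pick_adj _ i j hij).trans (by rw [hiff i j hij]))
      (vmap6 ⇑e v ∘ wit1f s)
      ((vmap6_inj ⇑e v e.injective hv).comp hinj)
      (fun i j hij => vmap6_adj e v s hs _ _ (fun hc => hij (hinj hc)))⟩
    cases hwb : wit1b s
    · rw [hwb] at hne; exact hf1 hne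
    · rw [hwb] at hne; exact hf2 hne

lemma pair (hf1 : ¬ Nonempty (pathGraph 5 ↪g G)) (hf2 : ¬ Nonempty ((pathGraph 5)ᶜ ↪g G))
    (e : cycleGraph 5 ↪g G) (u w : V) (hu : u ∉ Set.range ⇑e) (hw : w ∉ Set.range ⇑e)
    (huw : u ≠ w) (p q : PatKind)
    (hp : ∀ m, G.Adj u (e m) ↔ patFun p m = true)
    (hq : ∀ m, G.Adj w (e m) ↔ patFun q m = true)
    (b : Bool) (hb : G.Adj u w ↔ b = true) :
    incompatB p q b = false := by
  by_cases h1 : incompatB p q b = true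
  case neg => exact Bool.eq_false_iff.mpr h1
  exfalso
  obtain ⟨hinj, hiff⟩ := D2 p q _ h1
  have hne : Nonempty (pick (wit2b p q b) ↪g G) := ⟨embOfBool _
    (fun i j => tadj (patFun p) (patFun q) b
      (wit2f p q b i) (wit2f p q b j))
    (fun i j hij => (pick_adj _ i j hij).trans (by rw [hiff i j hij]))
    (vmap7 ⇑e u w ∘ wit2f p q b)
    ((vmap7_inj ⇑e u w e.injective hu hw huw).comp hinj)
    (fun i j hij => vmap7_adj e u w _ _ _ hp hq hb _ _ (fun hc => hij (hinj hc)))⟩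
  cases hwb : wit2b p q b
  · rw [hwb] at hne; exact hf1 hne
  · rw [hwb] at hne; exact hf2 hne

end Stmt18Aux

theorem stmt18 [Fintype V] (G : SimpleGraph V) (hprime : IsPrimeGraph G)
    (hfree1 : HFree (pathGraph 5) G) (hfree2 : HFree ((pathGraph 5)ᶜ) G)
    (hC5 : Nonempty (cycleGraph 5 ↪g G)) :
    Nonempty (G ≃g cycleGraph 5) := by
  classical
  obtain ⟨e⟩ := hC5
  by_cases hall : ∀ v : V, v ∈ Set.range ⇑e
  · exact ⟨((⟨Equiv.ofBijective ⇑e ⟨e.injective, fun v => hall v⟩,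
      fun {a b} => e.map_rel_iff⟩ : cycleGraph 5 ≃g G)).symm⟩
  · exfalso
    push_neg at hall
    obtain ⟨v0, hv0⟩ := hall
    have hsingle : ∀ v, v ∉ Set.range ⇑e →
        ∃ p, ∀ m, G.Adj v (e m) ↔ Stmt18Aux.patFun p m = true :=
      fun v hv => Stmt18Aux.single hfree1 hfree2 e v hv
    choose ty hty using hsingle
    have hpair : ∀ (u w : V) (hu : u ∉ Set.range ⇑e) (hw : w ∉ Set.range ⇑e), u ≠ w →
        Stmt18Aux.incompatB (ty u hu) (ty w hw) (decide (G.Adj u w)) = false :=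
      fun u w hu hw huw =>
        Stmt18Aux.pair hfree1 hfree2 e u w hu hw huw _ _ (hty u hu) (hty w hw)
          (decide (G.Adj u w)) decide_eq_true_iff.symm
    by_cases hNF : ∃ v, ∃ h : v ∉ Set.range ⇑e, Stmt18Aux.tyIdx (ty v h) = none
    · obtain ⟨vN, hN, hNone⟩ := hNF
      refine hprime.2
        {x | x ∈ Set.range ⇑e ∨ ∃ h : x ∉ Set.range ⇑e, (Stmt18Aux.tyIdx (ty x h)).isSome}
        ⟨?_, ?_, ?_⟩
      · refine (Set.one_lt_ncard (Set.toFinite _)).mpr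
          ⟨e 0, Or.inl ⟨0, rfl⟩, e 1, Or.inl ⟨1, rfl⟩, e.injective.ne (by decide)⟩
      · have hcard : (Set.univ : Set V).ncard = Fintype.card V := by
          rw [Set.ncard_univ, Nat.card_eq_fintype_card]
        rw [← hcard]
        refine Set.ncard_lt_ncard (Set.ssubset_univ_iff.mpr ?_) (Set.toFinite _)
        intro hXeq
        have hmem : vN ∈ {x | x ∈ Set.range ⇑e ∨
            ∃ h : x ∉ Set.range ⇑e, (Stmt18Aux.tyIdx (ty x h)).isSome} :=
          hXeq ▸ Set.mem_univ _
        rcases hmem with hr | ⟨h, hsome⟩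
        · exact hN hr
        · rw [hNone] at hsome
          simp at hsome
      · intro z hz
        have hz1 : z ∉ Set.range ⇑e := fun hr => hz (Or.inl hr)
        have hz2 : Stmt18Aux.tyIdx (ty z hz1) = none := by
          rcases h : Stmt18Aux.tyIdx (ty z hz1) with _ | j
          · rfl
          · exact absurd (Or.inr ⟨hz1, by rw [h]; rfl⟩) hz
        rcases Stmt18Aux.tyIdx_none _ hz2 with hNty | hFty
        · have hnone : ∀ x ∈ {x | x ∈ Set.range ⇑e ∨
              ∃ h : x ∉ Set.range ⇑e, (Stmt18Aux.tyIdx (ty x h)).isSome}, ¬ G.Adj z x := by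
            rintro x (⟨m, rfl⟩ | ⟨hx, hxs⟩)
            · intro ha
              have h2 := (hty z hz1 m).mp ha
              rw [hNty] at h2
              simp [Stmt18Aux.patFun] at h2
            · intro ha
              have hzx : z ≠ x := fun he' => hz (he' ▸ (Or.inr ⟨hx, hxs⟩))
              have hp := hpair z x hz1 hx hzx
              obtain ⟨j, hj⟩ := Option.isSome_iff_exists.mp hxs
              rw [hNty, Stmt18Aux.inc_N _ _ (by simp [hj])] at hp
              exact absurd ha (of_decide_eq_false hp)
          rintro ⟨⟨x1, hx1, ha1⟩, -⟩
          exact hnone x1 hx1 ha1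
        · have hall' : ∀ x ∈ {x | x ∈ Set.range ⇑e ∨
              ∃ h : x ∉ Set.range ⇑e, (Stmt18Aux.tyIdx (ty x h)).isSome}, G.Adj z x := by
            rintro x (⟨m, rfl⟩ | ⟨hx, hxs⟩)
            · exact (hty z hz1 m).mpr (by rw [hFty]; rfl)
            · have hzx : z ≠ x := fun he' => hz (he' ▸ (Or.inr ⟨hx, hxs⟩))
              have hp := hpair z x hz1 hx hzx
              obtain ⟨j, hj⟩ := Option.isSome_iff_exists.mp hxs
              rw [hFty, Stmt18Aux.inc_F _ _ (by simp [hj])] at hp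
              have h2 : decide (G.Adj z x) = true := by simpa using hp
              exact of_decide_eq_true h2
          rintro ⟨-, ⟨x2, hx2, ha2⟩⟩
          exact ha2 (hall' x2 hx2)
    · push_neg at hNF
      obtain ⟨i0, hi0⟩ : ∃ i, Stmt18Aux.tyIdx (ty v0 hv0) = some i := by
        rcases h : Stmt18Aux.tyIdx (ty v0 hv0) with _ | j
        · exact absurd h (hNF v0 hv0)
        · exact ⟨j, rfl⟩
      refine hprime.2
        (insert (e i0) {x | ∃ h : x ∉ Set.range ⇑e, Stmt18Aux.tyIdx (ty x h) = some i0})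
        ⟨?_, ?_, ?_⟩
      · refine (Set.one_lt_ncard (Set.toFinite _)).mpr
          ⟨e i0, Set.mem_insert _ _, v0, Set.mem_insert_of_mem _ ⟨hv0, hi0⟩, ?_⟩
        intro h
        exact hv0 ⟨i0, h⟩
      · have hcard : (Set.univ : Set V).ncard = Fintype.card V := by
          rw [Set.ncard_univ, Nat.card_eq_fintype_card]
        rw [← hcard]
        refine Set.ncard_lt_ncard (Set.ssubset_univ_iff.mpr ?_) (Set.toFinite _)
        intro hXeq
        have hmem : e (i0 + 1) ∈ insert (e i0)
            {x | ∃ h : x ∉ Set.range ⇑e, Stmt18Aux.tyIdx (ty x h) = some i0} :=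
          hXeq ▸ Set.mem_univ _
        rcases Set.mem_insert_iff.mp hmem with heq | ⟨h, -⟩
        · exact (by decide : ∀ i : Fin 5, i + 1 ≠ i) i0 (e.injective heq)
        · exact h ⟨i0 + 1, rfl⟩
      · intro z hz
        by_cases hzr : z ∈ Set.range ⇑e
        · obtain ⟨k, rfl⟩ := hzr
          have hki : k ≠ i0 := fun h =>
            hz (h ▸ Set.mem_insert _ _)
          have huni : ∀ x ∈ insert (e i0)
              {x | ∃ h : x ∉ Set.range ⇑e, Stmt18Aux.tyIdx (ty x h) = some i0},
              (G.Adj (e k) x ↔ Stmt18Aux.cadj5 k i0 = true) := by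
            intro x hx
            rcases Set.mem_insert_iff.mp hx with rfl | ⟨hxr, hxi⟩
            · exact e.map_rel_iff.trans (Stmt18Aux.cadj5_iff k i0)
            · have h2 := hty x hxr k
              rw [Stmt18Aux.F1 _ i0 k hxi hki] at h2
              exact (G.adj_comm _ _).trans h2
          rintro ⟨⟨x1, hx1, ha1⟩, ⟨x2, hx2, ha2⟩⟩
          exact ha2 ((huni x2 hx2).mpr ((huni x1 hx1).mp ha1))
        · obtain ⟨j, hj⟩ : ∃ j, Stmt18Aux.tyIdx (ty z hzr) = some j := by
            rcases h : Stmt18Aux.tyIdx (ty z hzr) with _ | j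
            · exact absurd h (hNF z hzr)
            · exact ⟨j, rfl⟩
          have hjne : j ≠ i0 := by
            intro h
            exact hz (Set.mem_insert_of_mem _ ⟨hzr, h ▸ hj⟩)
          have huni : ∀ x ∈ insert (e i0)
              {x | ∃ h : x ∉ Set.range ⇑e, Stmt18Aux.tyIdx (ty x h) = some i0},
              (G.Adj z x ↔ Stmt18Aux.cadj5 j i0 = true) := by
            intro x hx
            rcases Set.mem_insert_iff.mp hx with rfl | ⟨hxr, hxi⟩
            · have h2 := hty z hzr i0
              rw [Stmt18Aux.F1 _ j i0 hj (Ne.symm hjne), Stmt18Aux.cadj5_symm] at h2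
              exact h2
            · have hzx : z ≠ x := fun h => hz (h ▸ Set.mem_insert_of_mem _ ⟨hxr, hxi⟩)
              have hp := hpair z x hzr hxr hzx
              rw [Stmt18Aux.inc_some _ _ j i0 _ hj hxi hjne] at hp
              have hbe : decide (G.Adj z x) = Stmt18Aux.cadj5 j i0 := by
                simpa using hp
              constructor
              · intro ha
                rw [← hbe]
                exact decide_eq_true ha
              · intro hc
                exact of_decide_eq_true (hbe.trans hc)
          rintro ⟨⟨x1, hx1, ha1⟩, ⟨x2, hx2, ha2⟩⟩
          exact ha2 ((huni x2 hx2).mpr ((huni x1 hx1).mp ha1))
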